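/- arXiv:2302.01364 — 2 statements merged into one kernel-verified Lean document; each statement's English description precedes it below -/
import Mathlib

section
/- There exist constants 0 < c₁ ≤ c₂ < ∞ such that c₁ ≤ R(y) ≤ c₂ for all y ≥ 0; that is, the function R is uniformly strictly positive and bounded on [0,∞). -/
open Matrix NormedSpace
open scoped Nat

/-- The `m×m` matrix with diagonal entries `-a i`, subdiagonal entries `g i`, zero elsewhere. -/
def igoA (m : ℕ) (a : Fin m → ℝ) (g : Fin (m - 1) → ℝ) : Matrix (Fin m) (Fin m) ℝ :=
  fun i j =>
    if i = j then -a i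
    else if h : (i : ℕ) = (j : ℕ) + 1 then g ⟨(j : ℕ), by have := i.isLt; omega⟩
    else 0

/-- The first standard basis vector `e₁` of `ℝ^m`. -/
def igoB (m : ℕ) : Fin m → ℝ := fun i => if (i : ℕ) = 0 then 1 else 0

/-- The last standard basis vector `e_m` of `ℝ^m` (acting as the row `C = e_mᵀ`). -/
def igoC (m : ℕ) : Fin m → ℝ := fun i => if (i : ℕ) = m - 1 then 1 else 0

/-- The function `R(y) = F(y) · C (exp(−Φ(y)A) − I)⁻¹ B` of the equation of periods. -/
noncomputable def igoR (m : ℕ) (a : Fin m → ℝ) (g : Fin (m - 1) → ℝ)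
    (Φ F : ℝ → ℝ) (y : ℝ) : ℝ :=
  F y * (igoC m ⬝ᵥ ((exp (-(Φ y) • igoA m a g) - 1)⁻¹ :
    Matrix (Fin m) (Fin m) ℝ).mulVec (igoB m))

/-!
For `ξ > 0` put `E = exp (ξ A)`. Since `exp (-ξ A) E = 1`, the matrix `exp (-ξ A) - 1` has the
Neumann-series inverse `∑_{k ≥ 1} E ^ k` as soon as the powers of `E` are summable. As `A` is
Metzler, `exp` is entrywise nonnegative and monotone on such matrices; comparing `A ≤ N - α` with
`N` the nilpotent subdiagonal part and `α = min aᵢ` gives `E ^ k ≤ e^{-kξα} exp (kξN)`, a geometric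
factor times a polynomial in `k`. The positive subdiagonal makes the corner entry of `E`, hence of
the inverse, positive. That corner entry is continuous in `ξ`, so it lies between two positive
constants on `[Φ₁, Φ₂]`, and `R(y)` is such a value times `F y ∈ [F₁, F₂]`.
-/

namespace Matrix

section Nonneg

variable {n : Type*} [Fintype n] [DecidableEq n]

theorem pow_apply_le_pow_apply {α : Type*} [Semiring α] [PartialOrder α] [IsOrderedRing α]
    {P Q : Matrix n n α} (hP : ∀ i j, 0 ≤ P i j) (hPQ : ∀ i j, P i j ≤ Q i j) (k : ℕ) :
    ∀ i j, (P ^ k) i j ≤ (Q ^ k) i j := by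
  induction k with
  | zero => simp
  | succ k ih =>
    intro i j
    simp only [pow_succ, mul_apply]
    exact Finset.sum_le_sum fun l _ => mul_le_mul (ih i l) (hPQ l j) (hP l j)
      ((pow_apply_nonneg hP k i l).trans (ih i l))

theorem hasSum_exp_apply (P : Matrix n n ℝ) (i j : n) :
    HasSum (fun k => (P ^ k) i j / k !) (exp P i j) := by
  have h : HasSum (fun k => (k !⁻¹ : ℝ) • P ^ k) (exp P) :=
    open scoped Norms.Operator in exp_series_hasSum_exp' P
  simpa [div_eq_inv_mul] using Pi.hasSum.mp (Pi.hasSum.mp h i) j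

theorem exp_apply_nonneg {P : Matrix n n ℝ} (hP : ∀ i j, 0 ≤ P i j) (i j : n) :
    0 ≤ exp P i j :=
  (hasSum_exp_apply P i j).nonneg fun k => by
    have := pow_apply_nonneg hP k i j
    positivity

theorem exp_apply_le_exp_apply {P Q : Matrix n n ℝ} (hP : ∀ i j, 0 ≤ P i j)
    (hPQ : ∀ i j, P i j ≤ Q i j) (i j : n) : exp P i j ≤ exp Q i j :=
  hasSum_le (fun k => by gcongr; exact pow_apply_le_pow_apply hP hPQ k i j)
    (hasSum_exp_apply P i j) (hasSum_exp_apply Q i j)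

theorem pow_apply_div_factorial_le_exp_apply {P : Matrix n n ℝ} (hP : ∀ i j, 0 ≤ P i j)
    (k : ℕ) (i j : n) : (P ^ k) i j / k ! ≤ exp P i j :=
  le_hasSum (hasSum_exp_apply P i j) k fun l _ => by
    have := pow_apply_nonneg hP l i j
    positivity

theorem exp_smul_one (c : ℝ) : exp (c • (1 : Matrix n n ℝ)) = Real.exp c • 1 := by
  rw [smul_one_eq_diagonal, exp_diagonal, smul_one_eq_diagonal, Pi.exp_def, Real.exp_eq_exp_ℝ]

theorem exp_add_smul_one (P : Matrix n n ℝ) (c : ℝ) :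
    exp (P + c • 1) = Real.exp c • exp P := by
  rw [exp_add_of_commute _ _ ((Commute.one_right P).smul_right c), exp_smul_one, mul_smul_comm,
    mul_one]

end Nonneg

section Metzler

variable {n : Type*}

def IsMetzler (P : Matrix n n ℝ) : Prop := ∀ i j, i ≠ j → 0 ≤ P i j

theorem IsMetzler.smul {P : Matrix n n ℝ} (hP : P.IsMetzler) {t : ℝ} (ht : 0 ≤ t) :
    (t • P).IsMetzler := fun i j hij => mul_nonneg ht (hP i j hij)

variable [Fintype n] [DecidableEq n]

theorem IsMetzler.exists_nonneg_add_smul_one {P : Matrix n n ℝ} (hP : P.IsMetzler) :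
    ∃ c : ℝ, ∀ i j, 0 ≤ (P + c • 1) i j := by
  refine ⟨∑ i, |P i i|, fun i j => ?_⟩
  rcases eq_or_ne i j with rfl | hij
  · have := Finset.single_le_sum (fun l _ => abs_nonneg (P l l)) (Finset.mem_univ i)
    simp only [add_apply, smul_apply, one_apply_eq, smul_eq_mul, mul_one]
    linarith [neg_abs_le (P i i)]
  · simpa [one_apply_ne hij] using hP i j hij

theorem IsMetzler.exp_apply_nonneg {P : Matrix n n ℝ} (hP : P.IsMetzler) (i j : n) :
    0 ≤ exp P i j := by
  obtain ⟨c, hc⟩ := hP.exists_nonneg_add_smul_one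
  have h := Matrix.exp_apply_nonneg hc i j
  rw [exp_add_smul_one, smul_apply, smul_eq_mul] at h
  exact nonneg_of_mul_nonneg_right h (Real.exp_pos c)

theorem IsMetzler.exp_apply_le_exp_apply {P Q : Matrix n n ℝ} (hP : P.IsMetzler)
    (hPQ : ∀ i j, P i j ≤ Q i j) (i j : n) : exp P i j ≤ exp Q i j := by
  obtain ⟨c, hc⟩ := hP.exists_nonneg_add_smul_one
  have h := Matrix.exp_apply_le_exp_apply (Q := Q + c • 1) hc
    (fun i j => by simp only [add_apply]; linarith [hPQ i j]) i j
  rw [exp_add_smul_one, exp_add_smul_one, smul_apply, smul_apply, smul_eq_mul,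
    smul_eq_mul] at h
  exact le_of_mul_le_mul_left h (Real.exp_pos c)

end Metzler

section Subdiagonal

variable {m : ℕ}

theorem pow_apply_pos_of_subdiag_pos {P : Matrix (Fin m) (Fin m) ℝ} (hP : ∀ i j, 0 ≤ P i j)
    (hsub : ∀ i j : Fin m, (i : ℕ) = j + 1 → 0 < P i j) (k : ℕ) :
    ∀ i j : Fin m, (i : ℕ) = j + k → 0 < (P ^ k) i j := by
  induction k with
  | zero =>
    intro i j hij
    obtain rfl : i = j := Fin.ext (by simpa using hij)
    simp
  | succ k ih =>
    intro i j hij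
    rw [pow_succ', mul_apply]
    refine Finset.sum_pos' (fun l _ => mul_nonneg (hP i l) (pow_apply_nonneg hP k l j))
      ⟨⟨j + k, by omega⟩, Finset.mem_univ _, mul_pos (hsub _ _ (by omega)) (ih _ _ rfl)⟩

theorem IsMetzler.exp_apply_pos_of_subdiag_pos {P : Matrix (Fin m) (Fin m) ℝ}
    (hP : P.IsMetzler) (hsub : ∀ i j : Fin m, (i : ℕ) = j + 1 → 0 < P i j) {i j : Fin m}
    (hij : (j : ℕ) ≤ i) : 0 < exp P i j := by
  obtain ⟨c, hc⟩ := hP.exists_nonneg_add_smul_one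
  have hsub' : ∀ i j : Fin m, (i : ℕ) = j + 1 → 0 < (P + c • 1) i j := fun i j h => by
    simpa [one_apply_ne (Fin.ne_of_val_ne (by omega) : i ≠ j)] using hsub i j h
  have h := pow_apply_div_factorial_le_exp_apply hc (i - j) i j
  rw [exp_add_smul_one, smul_apply, smul_eq_mul] at h
  have hpos := pow_apply_pos_of_subdiag_pos hc hsub' (i - j) i j (by omega)
  exact pos_of_mul_pos_right ((div_pos hpos (by positivity)).trans_le h) (Real.exp_pos c).le

theorem pow_apply_eq_zero_of_strictlyLower {α : Type*} [Semiring α]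
    {P : Matrix (Fin m) (Fin m) α} (hP : ∀ i j : Fin m, (i : ℕ) ≤ j → P i j = 0) (k : ℕ) :
    ∀ i j : Fin m, (i : ℕ) < j + k → (P ^ k) i j = 0 := by
  induction k with
  | zero => exact fun i j hij => one_apply_ne (Fin.ne_of_val_ne (by omega))
  | succ k ih =>
    intro i j hij
    rw [pow_succ, mul_apply]
    refine Finset.sum_eq_zero fun l _ => ?_
    rcases lt_or_ge (i : ℕ) (l + k) with h | h
    · rw [ih i l h, zero_mul]
    · rw [hP l j (by omega), mul_zero]

theorem isNilpotent_of_strictlyLower {α : Type*} [Semiring α] {P : Matrix (Fin m) (Fin m) α}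
    (hP : ∀ i j : Fin m, (i : ℕ) ≤ j → P i j = 0) : IsNilpotent P :=
  ⟨m, ext fun i j => pow_apply_eq_zero_of_strictlyLower hP m i j (by omega)⟩

end Subdiagonal

section Neumann

variable {n : Type*} [Fintype n] [DecidableEq n]

theorem summable_geometric_mul_exp_pow_apply {N : Matrix n n ℝ} (hN : IsNilpotent N) {r : ℝ}
    (hr : ‖r‖ < 1) (i j : n) : Summable fun k : ℕ => r ^ k * (exp N ^ k) i j := by
  obtain ⟨d, hd⟩ := hN
  have hexp (k : ℕ) :
      (exp N ^ k) i j = ∑ l ∈ Finset.range d, (N ^ l) i j / l ! * (k : ℝ) ^ l := by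
    rw [← exp_nsmul, ← Nat.cast_smul_eq_nsmul ℝ]
    refine (hasSum_exp_apply _ i j).unique (hasSum_sum_of_ne_finset_zero fun l hl => ?_) |>.trans
      (Finset.sum_congr rfl fun l _ => ?_)
    · rw [Finset.mem_range, not_lt] at hl
      simp [smul_pow, pow_eq_zero_of_le hl hd]
    · simp only [smul_pow, smul_apply, smul_eq_mul]
      ring
  simp_rw [hexp, Finset.mul_sum]
  refine summable_sum fun l _ => ?_
  simpa [mul_comm, mul_left_comm, mul_assoc] using
    (summable_pow_mul_geometric_of_norm_lt_one l hr).mul_left ((N ^ l) i j / l !)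

theorem summable_pow_exp_of_le_sub_smul_one {P N : Matrix n n ℝ} (hP : P.IsMetzler)
    (hN : IsNilpotent N) {α : ℝ} (hα : 0 < α)
    (hPN : ∀ i j, P i j ≤ (N - α • 1) i j) : Summable (exp P ^ ·) := by
  have hle : ∀ i j, exp P i j ≤ (Real.exp (-α) • exp N) i j := fun i j => by
    simpa only [sub_eq_add_neg, ← neg_smul, exp_add_smul_one] using
      hP.exp_apply_le_exp_apply hPN i j
  have hbound (k : ℕ) (i j : n) :
      (exp P ^ k) i j ≤ Real.exp (-α) ^ k * (exp N ^ k) i j := by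
    simpa [smul_pow] using pow_apply_le_pow_apply hP.exp_apply_nonneg hle k i j
  have hr : ‖Real.exp (-α)‖ < 1 := by
    rw [Real.norm_eq_abs, abs_of_pos (Real.exp_pos _), Real.exp_lt_one_iff]
    linarith
  refine Pi.summable.mpr fun i => Pi.summable.mpr fun j => ?_
  exact (summable_geometric_mul_exp_pow_apply hN hr i j).of_nonneg_of_le
    (fun k => pow_apply_nonneg hP.exp_apply_nonneg k i j) (fun k => hbound k i j)

theorem sub_one_mul_tsum_pow_succ {K : Type*} [CommRing K] [TopologicalSpace K]
    [IsTopologicalRing K] [T2Space K] {E F : Matrix n n K} (hFE : F * E = 1)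
    (hE : Summable (E ^ ·)) : (F - 1) * ∑' k : ℕ, E ^ (k + 1) = 1 := by
  simp_rw [pow_succ']
  rw [hE.tsum_mul_left, ← mul_assoc, sub_mul, hFE, one_mul]
  exact hE.one_sub_mul_tsum_pow

theorem apply_le_tsum_pow_succ_apply {E : Matrix n n ℝ} (hE : Summable (E ^ ·))
    (hnn : ∀ i j, 0 ≤ E i j) (i j : n) : E i j ≤ (∑' k : ℕ, E ^ (k + 1)) i j := by
  have h := Pi.hasSum.mp (Pi.hasSum.mp ((summable_nat_add_iff 1).mpr hE).hasSum i) j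
  simpa using le_hasSum h 0 fun k _ => pow_apply_nonneg hnn (k + 1) i j

theorem exp_neg_mul_exp (A : Matrix n n ℝ) : exp (-A) * exp A = 1 := by
  rw [← exp_add_of_commute _ _ (Commute.neg_left (Commute.refl A)), neg_add_cancel, exp_zero]

end Neumann

theorem continuousAt_inv_of_isUnit_det {X n : Type*} [TopologicalSpace X] [Fintype n]
    [DecidableEq n] {f : X → Matrix n n ℝ} {x : X} (hf : ContinuousAt f x)
    (hx : IsUnit (f x).det) : ContinuousAt (fun t => (f t)⁻¹) x := by
  refine (continuousAt_matrix_inv _ ?_).comp hf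
  rw [Ring.inverse_eq_inv']
  exact continuousAt_inv₀ hx.ne_zero

theorem continuousAt_inv_exp_neg_smul_sub_one {n : Type*} [Fintype n] [DecidableEq n]
    (A : Matrix n n ℝ) {ξ : ℝ} (hξ : IsUnit (exp (-ξ • A) - 1).det) :
    ContinuousAt (fun t : ℝ => (exp (-t • A) - 1)⁻¹) ξ := by
  have : Continuous (exp : Matrix n n ℝ → Matrix n n ℝ) :=
    open scoped Norms.Operator in exp_continuous
  exact continuousAt_inv_of_isUnit_det (by fun_prop) hξ

end Matrix

theorem IsCompact.exists_pos_bounds {X : Type*} [TopologicalSpace X] {s : Set X}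
    (hs : IsCompact s) (hne : s.Nonempty) {f : X → ℝ} (hf : ContinuousOn f s)
    (hpos : ∀ x ∈ s, 0 < f x) : ∃ c₁ c₂ : ℝ, 0 < c₁ ∧ ∀ x ∈ s, c₁ ≤ f x ∧ f x ≤ c₂ := by
  obtain ⟨x₁, hx₁, hmin⟩ := hs.exists_isMinOn hne hf
  obtain ⟨x₂, -, hmax⟩ := hs.exists_isMaxOn hne hf
  exact ⟨f x₁, f x₂, hpos x₁ hx₁, fun x hx => ⟨hmin hx, hmax hx⟩⟩

section Bidiagonal

variable {m : ℕ} (a : Fin m → ℝ) (g : Fin (m - 1) → ℝ)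

theorem igoA_eq_sub_diagonal : igoA m a g = igoA m 0 g - diagonal a := by
  ext i j
  rcases eq_or_ne i j with rfl | hij
  · simp [igoA]
  · simp [igoA, hij]

variable {g}

theorem igoA_zero_apply_nonneg (hg : ∀ i, 0 ≤ g i) (i j : Fin m) : 0 ≤ igoA m 0 g i j := by
  unfold igoA
  split_ifs
  · simp
  · exact hg _
  · exact le_rfl

theorem igoA_zero_apply_of_le {i j : Fin m} (hij : (i : ℕ) ≤ j) : igoA m 0 g i j = 0 := by
  rcases eq_or_ne i j with rfl | hne
  · simp [igoA]
  · simp [igoA, hne, show (i : ℕ) ≠ j + 1 by omega]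

theorem igoA_apply_subdiag {i j : Fin m} (hij : (i : ℕ) = j + 1) :
    igoA m a g i j = g ⟨j, by omega⟩ := by
  simp [igoA, Fin.ne_of_val_ne (by omega : (i : ℕ) ≠ j), hij]

theorem isMetzler_igoA (hg : ∀ i, 0 ≤ g i) : (igoA m a g).IsMetzler := fun i j hij => by
  simpa [igoA_eq_sub_diagonal a, hij] using igoA_zero_apply_nonneg hg i j

variable {a}

theorem summable_pow_exp_smul_igoA (ha : ∀ i, 0 < a i) (hg : ∀ i, 0 < g i) {ξ : ℝ}
    (hξ : 0 < ξ) : Summable (exp (ξ • igoA m a g) ^ ·) := by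
  obtain ⟨α, hα, haα⟩ : ∃ α > 0, ∀ i, α ≤ a i := by
    rcases isEmpty_or_nonempty (Fin m) with h | h
    · exact ⟨1, one_pos, h.elim⟩
    · obtain ⟨i₀, hi₀⟩ := Finite.exists_min a
      exact ⟨a i₀, ha i₀, hi₀⟩
  refine summable_pow_exp_of_le_sub_smul_one ((isMetzler_igoA a fun i => (hg i).le).smul hξ.le)
    (N := ξ • igoA m 0 g) (α := ξ * α) ?_ (by positivity) ?_
  · exact (isNilpotent_of_strictlyLower fun i j h => igoA_zero_apply_of_le h).smul ξ
  · intro i j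
    rw [igoA_eq_sub_diagonal a]
    rcases eq_or_ne i j with rfl | hij
    · simp only [Matrix.smul_apply, Matrix.sub_apply, diagonal_apply_eq, smul_eq_mul, one_apply_eq, mul_one]
      nlinarith [haα i]
    · simp [hij]

theorem exp_smul_igoA_apply_pos (hg : ∀ i, 0 < g i) {ξ : ℝ} (hξ : 0 < ξ) {i j : Fin m}
    (hij : (j : ℕ) ≤ i) : 0 < exp (ξ • igoA m a g) i j :=
  ((isMetzler_igoA a fun i => (hg i).le).smul hξ.le).exp_apply_pos_of_subdiag_pos
    (fun i j h => by simpa [igoA_apply_subdiag a h] using mul_pos hξ (hg _)) hij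

theorem exp_neg_smul_igoA_sub_one_mul_tsum (ha : ∀ i, 0 < a i) (hg : ∀ i, 0 < g i) {ξ : ℝ}
    (hξ : 0 < ξ) :
    (exp (-ξ • igoA m a g) - 1) * ∑' k : ℕ, exp (ξ • igoA m a g) ^ (k + 1) = 1 :=
  sub_one_mul_tsum_pow_succ (by rw [neg_smul, exp_neg_mul_exp])
    (summable_pow_exp_smul_igoA ha hg hξ)

theorem isUnit_det_exp_neg_smul_igoA_sub_one (ha : ∀ i, 0 < a i) (hg : ∀ i, 0 < g i)
    {ξ : ℝ} (hξ : 0 < ξ) : IsUnit (exp (-ξ • igoA m a g) - 1).det :=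
  isUnit_det_of_right_inverse (exp_neg_smul_igoA_sub_one_mul_tsum ha hg hξ)

theorem inv_exp_neg_smul_igoA_sub_one_apply_pos (ha : ∀ i, 0 < a i) (hg : ∀ i, 0 < g i)
    {ξ : ℝ} (hξ : 0 < ξ) {i j : Fin m} (hij : (j : ℕ) ≤ i) :
    0 < (exp (-ξ • igoA m a g) - 1)⁻¹ i j := by
  rw [inv_eq_right_inv (exp_neg_smul_igoA_sub_one_mul_tsum ha hg hξ)]
  exact (exp_smul_igoA_apply_pos hg hξ hij).trans_le
    (apply_le_tsum_pow_succ_apply (summable_pow_exp_smul_igoA ha hg hξ)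
      ((isMetzler_igoA a fun i => (hg i).le).smul hξ.le).exp_apply_nonneg i j)

end Bidiagonal

theorem igoC_dotProduct_mulVec_igoB {m : ℕ} (hm : 1 ≤ m) (T : Matrix (Fin m) (Fin m) ℝ) :
    igoC m ⬝ᵥ T *ᵥ igoB m = T ⟨m - 1, by omega⟩ ⟨0, by omega⟩ := by
  have hB : igoB m = Pi.single ⟨0, by omega⟩ 1 := by
    ext i
    simp [igoB, Pi.single_apply, Fin.ext_iff]
  have hC : igoC m = Pi.single ⟨m - 1, by omega⟩ 1 := by
    ext i
    simp [igoC, Pi.single_apply, Fin.ext_iff]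
  simp [hB, hC]

theorem stmt4_general (m : ℕ) (hm : 1 ≤ m) (a : Fin m → ℝ) (g : Fin (m - 1) → ℝ)
    (ha : ∀ i, 0 < a i) (hg : ∀ i, 0 < g i)
    (Φ F : ℝ → ℝ)
    (Φ₁ Φ₂ F₁ F₂ : ℝ) (hΦ₁ : 0 < Φ₁) (hF₁ : 0 < F₁) (hF₂ : 0 < F₂)
    (hΦ : ∀ y ≥ (0 : ℝ), Φ₁ ≤ Φ y ∧ Φ y ≤ Φ₂)
    (hF : ∀ y ≥ (0 : ℝ), F₁ ≤ F y ∧ F y ≤ F₂) :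
    ∃ c₁ c₂ : ℝ, 0 < c₁ ∧ c₁ ≤ c₂ ∧
      ∀ y ≥ (0 : ℝ), c₁ ≤ igoR m a g Φ F y ∧ igoR m a g Φ F y ≤ c₂ := by
  set ψ : ℝ → ℝ := fun ξ => (exp (-ξ • igoA m a g) - 1)⁻¹ ⟨m - 1, by omega⟩ ⟨0, by omega⟩
  have hR (y : ℝ) : igoR m a g Φ F y = F y * ψ (Φ y) := by
    rw [igoR, igoC_dotProduct_mulVec_igoB hm]
  have hpos : ∀ ξ ∈ Set.Icc Φ₁ Φ₂, 0 < ξ := fun ξ hξ => hΦ₁.trans_le hξ.1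
  have hψ : ContinuousOn ψ (Set.Icc Φ₁ Φ₂) := fun ξ hξ =>
    ((continuous_apply_apply _ _).continuousAt.comp (continuousAt_inv_exp_neg_smul_sub_one _
      (isUnit_det_exp_neg_smul_igoA_sub_one ha hg (hpos ξ hξ)))).continuousWithinAt
  obtain ⟨c₁, c₂, hc₁, hc⟩ := isCompact_Icc.exists_pos_bounds
    (Set.nonempty_Icc.mpr ((hΦ 0 le_rfl).1.trans (hΦ 0 le_rfl).2)) hψ
    fun ξ hξ => inv_exp_neg_smul_igoA_sub_one_apply_pos ha hg (hpos ξ hξ) (Nat.zero_le _)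
  have hbounds : ∀ y ≥ (0 : ℝ), F₁ * c₁ ≤ igoR m a g Φ F y ∧ igoR m a g Φ F y ≤ F₂ * c₂ := by
    intro y hy
    obtain ⟨hFy₁, hFy₂⟩ := hF y hy
    obtain ⟨hψy₁, hψy₂⟩ := hc (Φ y) (hΦ y hy)
    rw [hR]
    exact ⟨mul_le_mul hFy₁ hψy₁ hc₁.le (hF₁.trans_le hFy₁).le,
      mul_le_mul hFy₂ hψy₂ (hc₁.trans_le hψy₁).le hF₂.le⟩
  exact ⟨F₁ * c₁, F₂ * c₂, mul_pos hF₁ hc₁, (hbounds 0 le_rfl).1.trans (hbounds 0 le_rfl).2,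
    hbounds⟩

theorem stmt4 (m : ℕ) (hm : 1 ≤ m) (a : Fin m → ℝ) (g : Fin (m - 1) → ℝ)
    (ha : ∀ i, 0 < a i) (hg : ∀ i, 0 < g i)
    (Φ F : ℝ → ℝ) (hΦcont : ContinuousOn Φ (Set.Ici 0)) (hFcont : ContinuousOn F (Set.Ici 0))
    (Φ₁ Φ₂ F₁ F₂ : ℝ) (hΦ₁ : 0 < Φ₁) (hΦ₂ : 0 < Φ₂) (hF₁ : 0 < F₁) (hF₂ : 0 < F₂)
    (hΦ : ∀ y ≥ (0 : ℝ), Φ₁ ≤ Φ y ∧ Φ y ≤ Φ₂)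
    (hF : ∀ y ≥ (0 : ℝ), F₁ ≤ F y ∧ F y ≤ F₂) :
    ∃ c₁ c₂ : ℝ, 0 < c₁ ∧ c₁ ≤ c₂ ∧
      ∀ y ≥ (0 : ℝ), c₁ ≤ igoR m a g Φ F y ∧ igoR m a g Φ F y ≤ c₂ :=
  stmt4_general m hm a g ha hg Φ F Φ₁ Φ₂ F₁ F₂ hΦ₁ hF₁ hF₂ hΦ hF
end

section
/- Assume the a₁,…,a_m are pairwise distinct. Then for every ξ > 0, r(ξ) = (−ξ)^{m−1} ḡ · φ[ξa₁, …, ξa_m], where ḡ = g₁⋯g_{m−1}, φ(x) = 1/(eˣ − 1), and φ[·,…,·] denotes the divided difference of φ of order m−1 at the (pairwise distinct) points ξa₁,…,ξa_m. -/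
open Matrix NormedSpace

/-- The divided difference `f[x₀,…,x_k]` of order `k`, defined recursively by
`f[x₀] = f(x₀)` and `f[x₀,…,x_k] = (f[x₁,…,x_k] − f[x₀,…,x_{k−1}])/(x_k − x₀)`. -/
noncomputable def dividedDiff (f : ℝ → ℝ) : (k : ℕ) → (Fin (k + 1) → ℝ) → ℝ
  | 0, x => f (x 0)
  | k + 1, x =>
      (dividedDiff f k (fun i => x i.succ) - dividedDiff f k (fun i => x i.castSucc)) /
        (x (Fin.last (k + 1)) - x 0)

/-!
Put `d = ξ a`, `φ x = 1 / (eˣ - 1)` and `N = -ξA`, the lower bidiagonal matrix with diagonal `d`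
and subdiagonal `-ξ g`. The matrix `X = (exp N - 1)⁻¹` commutes with `N` and is lower triangular
with diagonal `φ (dᵢ)`, since on lower triangular matrices the diagonal is multiplicative, hence
respected by `exp` and by inversion. The `(last, 0)` entry of `X * N = N * X` expresses
`X last 0` through `X last 1` and `X (last - 1) 0`, the corner entries of the principal
submatrices of `X` without the first, resp. the last, row and column; these commute with the
corresponding submatrices of `N`. This is the recursion defining divided differences, so
induction on the size gives Opitz's formula `X last 0 = (∏ (-ξ gᵢ)) φ[d₀, …, d_k]`.
-/

namespace Matrix

section LowerTriangular

variable {n R : Type*} [LinearOrder n]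

theorem IsLowerTriangular.submatrix {m : Type*} [Preorder m] [Zero R] {M : Matrix n n R}
    {f : m → n} (hM : M.IsLowerTriangular) (hf : StrictMono f) :
    (M.submatrix f f).IsLowerTriangular :=
  fun _ _ h => hM (hf h)

variable [Fintype n]

theorem IsLowerTriangular.mul_apply_self [NonUnitalNonAssocSemiring R] {M N : Matrix n n R}
    (hM : M.IsLowerTriangular) (hN : N.IsLowerTriangular) (i : n) :
    (M * N) i i = M i i * N i i := by
  rw [mul_apply, Finset.sum_eq_single i]
  · intro j _ hji
    rcases hji.lt_or_gt with h | h
    · rw [hN h, mul_zero]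
    · rw [hM h, zero_mul]
  · simp

theorem IsLowerTriangular.pow_apply_self [Semiring R] {M : Matrix n n R}
    (hM : M.IsLowerTriangular) (i : n) (k : ℕ) : (M ^ k) i i = M i i ^ k := by
  induction k with
  | zero => simp
  | succ k ih => rw [pow_succ, IsLowerTriangular.mul_apply_self (hM.pow k) hM, ih, pow_succ]

theorem IsLowerTriangular.exp_apply_self {𝕂 : Type*} [RCLike 𝕂] {M : Matrix n n 𝕂}
    (hM : M.IsLowerTriangular) (i : n) : exp M i i = exp (M i i) := by
  have hM_series : HasSum (fun k : ℕ => ((k.factorial : 𝕂)⁻¹) • M ^ k) (exp M) := by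
    open scoped Norms.Operator in exact exp_series_hasSum_exp' M
  have h := Pi.hasSum.mp hM_series.matrix_diag i
  simp only [diag_apply, smul_apply, hM.pow_apply_self, smul_eq_mul] at h
  exact h.unique (exp_series_hasSum_exp' (𝕂 := 𝕂) (M i i))

theorem IsLowerTriangular.inv {K : Type*} [CommRing K] {M : Matrix n n K}
    (hM : M.IsLowerTriangular) : M⁻¹.IsLowerTriangular := by
  by_cases hdet : IsUnit M.det
  · let _ := invertibleOfIsUnitDet M hdet
    exact blockTriangular_inv_of_blockTriangular hM
  · rw [nonsing_inv_apply_not_isUnit M hdet]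
    exact blockTriangular_zero

theorem IsLowerTriangular.inv_apply_self {K : Type*} [Field K] {M : Matrix n n K}
    (hM : M.IsLowerTriangular) (hdet : IsUnit M.det) (i : n) : M⁻¹ i i = (M i i)⁻¹ := by
  have h := congr_fun₂ (nonsing_inv_mul M hdet) i i
  rw [hM.inv.mul_apply_self hM, one_apply_eq] at h
  exact eq_inv_of_mul_eq_one_left h

end LowerTriangular

section FinSubmatrix

variable {R : Type*} [NonUnitalNonAssocSemiring R] {k : ℕ}
  {M N : Matrix (Fin (k + 1)) (Fin (k + 1)) R}

theorem IsLowerTriangular.submatrix_succ_mul (hN : N.IsLowerTriangular) :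
    (M * N).submatrix Fin.succ Fin.succ =
      M.submatrix Fin.succ Fin.succ * N.submatrix Fin.succ Fin.succ := by
  ext i j
  have hN0 : N 0 j.succ = 0 := hN (Fin.succ_pos j)
  simp only [submatrix_apply, mul_apply, Fin.sum_univ_succ, hN0, mul_zero, zero_add]

theorem IsLowerTriangular.submatrix_castSucc_mul (hM : M.IsLowerTriangular) :
    (M * N).submatrix Fin.castSucc Fin.castSucc =
      M.submatrix Fin.castSucc Fin.castSucc * N.submatrix Fin.castSucc Fin.castSucc := by
  ext i j
  have hM0 : M i.castSucc (Fin.last k) = 0 := hM (Fin.castSucc_lt_last i)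
  simp only [submatrix_apply, mul_apply, Fin.sum_univ_castSucc, hM0, zero_mul, add_zero]

theorem IsLowerTriangular.commute_submatrix_succ (hM : M.IsLowerTriangular)
    (hN : N.IsLowerTriangular) (h : Commute M N) :
    Commute (M.submatrix Fin.succ Fin.succ) (N.submatrix Fin.succ Fin.succ) := by
  rw [Commute, SemiconjBy, ← hN.submatrix_succ_mul, ← hM.submatrix_succ_mul, h.eq]

theorem IsLowerTriangular.commute_submatrix_castSucc (hM : M.IsLowerTriangular)
    (hN : N.IsLowerTriangular) (h : Commute M N) :
    Commute (M.submatrix Fin.castSucc Fin.castSucc) (N.submatrix Fin.castSucc Fin.castSucc) := by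
  rw [Commute, SemiconjBy, ← hM.submatrix_castSucc_mul, ← hN.submatrix_castSucc_mul, h.eq]

end FinSubmatrix

end Matrix

section igoA

variable {m k : ℕ}

@[simp]
theorem igoA_apply_self (a : Fin m → ℝ) (g : Fin (m - 1) → ℝ) (i : Fin m) :
    igoA m a g i i = -a i :=
  if_pos rfl

theorem igoA_apply_succ_castSucc (a : Fin (k + 1) → ℝ) (g : Fin k → ℝ) (i : Fin k) :
    igoA (k + 1) a g i.succ i.castSucc = g i := by
  simp [igoA, Fin.ext_iff]

theorem igoA_apply_of_ne {a : Fin m → ℝ} {g : Fin (m - 1) → ℝ} {i j : Fin m} (hij : i ≠ j)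
    (hsucc : (i : ℕ) ≠ j + 1) : igoA m a g i j = 0 := by
  simp [igoA, hij, hsucc]

theorem igoA_isLowerTriangular (a : Fin m → ℝ) (g : Fin (m - 1) → ℝ) :
    (igoA m a g).IsLowerTriangular := fun i j (h : i < j) =>
  igoA_apply_of_ne h.ne (by have : (i : ℕ) < j := h; omega)

theorem smul_igoA (c : ℝ) (a : Fin m → ℝ) (g : Fin (m - 1) → ℝ) :
    c • igoA m a g = igoA m (c • a) (c • g) := by
  ext i j
  simp only [igoA, Matrix.smul_apply, Pi.smul_apply, smul_eq_mul]
  split_ifs <;> ring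

theorem igoA_submatrix_succ (a : Fin (k + 2) → ℝ) (g : Fin (k + 1) → ℝ) :
    (igoA (k + 2) a g).submatrix Fin.succ Fin.succ =
      igoA (k + 1) (a ∘ Fin.succ) (g ∘ Fin.succ) := by
  ext i j
  simp [igoA, Fin.ext_iff]

theorem igoA_submatrix_castSucc (a : Fin (k + 2) → ℝ) (g : Fin (k + 1) → ℝ) :
    (igoA (k + 2) a g).submatrix Fin.castSucc Fin.castSucc =
      igoA (k + 1) (a ∘ Fin.castSucc) (g ∘ Fin.castSucc) := by
  ext i j
  simp [igoA, Fin.ext_iff]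

theorem mul_igoA_apply_zero (a : Fin (k + 2) → ℝ) (g : Fin (k + 1) → ℝ)
    (X : Matrix (Fin (k + 2)) (Fin (k + 2)) ℝ) (i : Fin (k + 2)) :
    (X * igoA (k + 2) a g) i 0 = X i 0 * -a 0 + X i 1 * g 0 := by
  rw [Matrix.mul_apply, Fintype.sum_eq_add 0 1 (by simp), igoA_apply_self]
  · exact congrArg (X i 0 * -a 0 + X i 1 * ·) (igoA_apply_succ_castSucc a g 0)
  · rintro l ⟨h0, h1⟩
    rw [igoA_apply_of_ne h0 (by simpa [Fin.ext_iff] using h1), mul_zero]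

theorem igoA_mul_apply_last (a : Fin (k + 2) → ℝ) (g : Fin (k + 1) → ℝ)
    (X : Matrix (Fin (k + 2)) (Fin (k + 2)) ℝ) (j : Fin (k + 2)) :
    (igoA (k + 2) a g * X) (Fin.last (k + 1)) j =
      g (Fin.last k) * X (Fin.last k).castSucc j +
        -a (Fin.last (k + 1)) * X (Fin.last (k + 1)) j := by
  rw [Matrix.mul_apply, Fintype.sum_eq_add (Fin.last k).castSucc (Fin.last (k + 1))
    (Fin.castSucc_lt_last _).ne, igoA_apply_self, ← Fin.succ_last, igoA_apply_succ_castSucc]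
  rintro l ⟨hk, hl⟩
  rw [igoA_apply_of_ne (Ne.symm hl) (by simp [Fin.ext_iff] at hk hl ⊢; omega), zero_mul]

end igoA

theorem Matrix.IsLowerTriangular.apply_last_zero_eq_prod_mul_dividedDiff (f : ℝ → ℝ) {k : ℕ}
    {a : Fin (k + 1) → ℝ} (g : Fin k → ℝ) {X : Matrix (Fin (k + 1)) (Fin (k + 1)) ℝ}
    (hX : X.IsLowerTriangular) (ha : Function.Injective a) (hdiag : ∀ i, X i i = f (-a i))
    (hcomm : Commute X (igoA (k + 1) a g)) :
    X (Fin.last k) 0 = (∏ i, g i) * dividedDiff f k (fun i => -a i) := by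
  induction k with
  | zero => simp [dividedDiff, ← hdiag]
  | succ k ih =>
    have hA := igoA_isLowerTriangular a g
    have h_succ := ih (g ∘ Fin.succ) (hX.submatrix Fin.strictMono_succ)
      (ha.comp (Fin.succ_injective _)) (fun i => hdiag i.succ)
      (igoA_submatrix_succ a g ▸ hX.commute_submatrix_succ hA hcomm)
    have h_castSucc := ih (g ∘ Fin.castSucc) (hX.submatrix Fin.strictMono_castSucc)
      (ha.comp (Fin.castSucc_injective _)) (fun i => hdiag i.castSucc)
      (igoA_submatrix_castSucc a g ▸ hX.commute_submatrix_castSucc hA hcomm)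
    simp only [submatrix_apply, Function.comp_apply, Fin.succ_last, Fin.succ_zero_eq_one,
      Fin.castSucc_zero, Nat.succ_eq_add_one] at h_succ h_castSucc
    have hentry := congr_fun₂ hcomm.eq (Fin.last (k + 1)) 0
    rw [mul_igoA_apply_zero, igoA_mul_apply_last] at hentry
    have hne : -a (Fin.last (k + 1)) - -a 0 ≠ 0 :=
      sub_ne_zero.mpr <| neg_injective.ne <| ha.ne Fin.last_pos.ne'
    rw [dividedDiff, mul_div_assoc', eq_div_iff hne]
    linear_combination -hentry + g 0 * h_succ - g (Fin.last k) * h_castSucc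
      - dividedDiff f k (fun i => -a i.succ) * Fin.prod_univ_succ g
      + dividedDiff f k (fun i => -a i.castSucc) * Fin.prod_univ_castSucc g

theorem igoC_dotProduct_mulVec_igoB_s10 {k : ℕ} (M : Matrix (Fin (k + 1)) (Fin (k + 1)) ℝ) :
    igoC (k + 1) ⬝ᵥ M *ᵥ igoB (k + 1) = M (Fin.last k) 0 := by
  have hB : igoB (k + 1) = Pi.single 0 1 := by
    ext i
    simp only [igoB, Pi.single_apply, Fin.ext_iff, Fin.val_zero]
  have hC : igoC (k + 1) = Pi.single (Fin.last k) 1 := by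
    ext i
    simp only [igoC, Pi.single_apply, Fin.ext_iff, Fin.val_last, Nat.add_sub_cancel]
  rw [hB, hC, mulVec_single_one, single_one_dotProduct, col_apply]

theorem stmt10_general (k : ℕ) (a : Fin (k + 1) → ℝ) (g : Fin k → ℝ)
    (ha : ∀ i, 0 < a i)
    (hdistinct : Function.Injective a) (ξ : ℝ) (hξ : 0 < ξ) :
    igoC (k + 1) ⬝ᵥ ((exp (-ξ • igoA (k + 1) a g) - 1)⁻¹ :
        Matrix (Fin (k + 1)) (Fin (k + 1)) ℝ).mulVec (igoB (k + 1)) =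
      (-ξ) ^ k * (∏ i, g i) *
        dividedDiff (fun x => 1 / (Real.exp x - 1)) k (fun i => ξ * a i) := by
  rw [smul_igoA, igoC_dotProduct_mulVec_igoB_s10]
  set A := igoA (k + 1) ((-ξ) • a) ((-ξ) • g)
  have hA : A.IsLowerTriangular := igoA_isLowerTriangular _ _
  have hE : (exp A - 1).IsLowerTriangular := hA.exp.sub blockTriangular_one
  have hE_diag (i) : (exp A - 1) i i = Real.exp (ξ * a i) - 1 := by
    rw [Matrix.sub_apply, hA.exp_apply_self, one_apply_eq]
    simp [A, Real.exp_eq_exp_ℝ]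
  have hE_diag_ne (i) : Real.exp (ξ * a i) - 1 ≠ 0 :=
    sub_ne_zero.mpr (Real.one_lt_exp_iff.mpr (mul_pos hξ (ha i))).ne'
  have hdet : IsUnit (exp A - 1).det := by
    rw [det_of_isLowerTriangular _ hE, isUnit_iff_ne_zero, Finset.prod_ne_zero_iff]
    simp [hE_diag, hE_diag_ne]
  have hcomm : Commute (exp A - 1)⁻¹ A := by
    rw [← Matrix.zpow_neg_one]
    exact Matrix.Commute.zpow_left ((Commute.refl A).exp_left.sub_left (Commute.one_left A)) (-1)
  have ha' : Function.Injective ((-ξ) • a) :=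
    (mul_right_injective₀ (neg_ne_zero.mpr hξ.ne')).comp hdistinct
  rw [hE.inv.apply_last_zero_eq_prod_mul_dividedDiff (fun x => 1 / (Real.exp x - 1)) _ ha' ?_
    hcomm]
  · simp only [Pi.smul_apply, smul_eq_mul, Finset.prod_mul_distrib, Finset.prod_const,
      Finset.card_univ, Fintype.card_fin]
    simp only [neg_mul, neg_neg]
  · intro i
    simp [hE.inv_apply_self hdet, hE_diag]

theorem stmt10 (k : ℕ) (a : Fin (k + 1) → ℝ) (g : Fin k → ℝ)
    (ha : ∀ i, 0 < a i) (hg : ∀ i, 0 < g i)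
    (hdistinct : Function.Injective a) (ξ : ℝ) (hξ : 0 < ξ) :
    igoC (k + 1) ⬝ᵥ ((exp (-ξ • igoA (k + 1) a g) - 1)⁻¹ :
        Matrix (Fin (k + 1)) (Fin (k + 1)) ℝ).mulVec (igoB (k + 1)) =
      (-ξ) ^ k * (∏ i, g i) *
        dividedDiff (fun x => 1 / (Real.exp x - 1)) k (fun i => ξ * a i) :=
  stmt10_general k a g ha hdistinct ξ hξ
end
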